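/- arXiv:1006.4342 — 4 statements merged into one kernel-verified Lean document; each statement's English description precedes it below -/
import Mathlib

section
/- Let A be a partial order and f : A → A monotone with r ≤ f(r). Suppose s₀, s₁, …, sₙ is a finite sequence with s₀ = r, sᵢ < sᵢ₊₁ ≤ f(sᵢ) for all i < n, and sₙ = f(sₙ). Then sₙ is the least fixed point of f relative to r, i.e., sₙ is the least element u with u = f(u) and r ≤ u. -/
/-! Each term of the chain lies below every prefixed point `u ≥ r`: inductively,
`s (i + 1) ≤ f (s i) ≤ f u ≤ u`. Since the chain also increases from `r` to the fixed point
`s n`, that fixed point is the least one above `r`. -/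

theorem Monotone.le_of_le_map_of_map_le {α : Type*} [Preorder α] {f : α → α} (hf : Monotone f)
    {s : ℕ → α} {n : ℕ} (hs : ∀ i < n, s (i + 1) ≤ f (s i)) {u : α} (hu : f u ≤ u)
    (h0 : s 0 ≤ u) : ∀ i ≤ n, s i ≤ u := by
  intro i hi
  induction i with
  | zero => exact h0
  | succ i ih =>
    calc s (i + 1) ≤ f (s i) := hs i hi
      _ ≤ f u := hf (ih (Nat.le_of_succ_le hi))
      _ ≤ u := hu

theorem cai_paige_general {A : Type*} [PartialOrder A] (f : A → A) (hf : Monotone f)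
    (r : A) (s : ℕ → A) (n : ℕ)
    (h0 : s 0 = r)
    (hstep : ∀ i < n, s i < s (i + 1) ∧ s (i + 1) ≤ f (s i))
    (hfix : s n = f (s n)) :
    IsLeast {u | u = f u ∧ r ≤ u} (s n) := by
  have hmono : MonotoneOn s (Set.Iic n) :=
    monotoneOn_of_le_succ Set.ordConnected_Iic fun i _ _ hi => (hstep i hi).1.le
  have hr_le : r ≤ s n := h0 ▸ hmono (Set.mem_Iic.2 n.zero_le) Set.self_mem_Iic n.zero_le
  refine ⟨⟨hfix, hr_le⟩, ?_⟩
  rintro u ⟨hu, hru⟩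
  exact hf.le_of_le_map_of_map_le (fun i hi => (hstep i hi).2) hu.ge (h0 ▸ hru) n le_rfl

theorem cai_paige {A : Type*} [PartialOrder A] (f : A → A) (hf : Monotone f)
    (r : A) (hr : r ≤ f r) (s : ℕ → A) (n : ℕ)
    (h0 : s 0 = r)
    (hstep : ∀ i < n, s i < s (i + 1) ∧ s (i + 1) ≤ f (s i))
    (hfix : s n = f (s n)) :
    IsLeast {u | u = f u ∧ r ≤ u} (s n) :=
  cai_paige_general f hf r s n h0 hstep hfix
end

section
/- Let A be a complete lattice, r ∈ A, f₀, f₁, … monotone functions inflationary at r and satisfying the Caged axiom (r ≤ x implies fᵢ₊₁(f̂ᵢ(x)) ≤ f̂ᵢ(x)). Let s₀, s₁, … be a sequence with s₀ = r and, for each i, either sᵢ < sᵢ₊₁ ≤ fᵢ(sᵢ) or sᵢ = fᵢ(sᵢ) (with sᵢ₊₁ = sᵢ). Then the closures applied to the increasing approximations are decreasing: f̂ᵢ₊₁(sᵢ₊₁) ≤ f̂ᵢ(sᵢ) for all i. -/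
/-!
Write `u = f̂ᵢ(sᵢ)`. Since `sᵢ₊₁ ≤ fᵢ(sᵢ) ≤ fᵢ(u) = u`, the point `u` lies above `sᵢ₊₁`, and the
Caged axiom (applicable because `r = s₀ ≤ sᵢ`) makes `u` a pre-fixed point of `fᵢ₊₁`. As
`sᵢ₊₁ ≤ fᵢ₊₁(sᵢ₊₁)`, Knaster–Tarski on the interval above `sᵢ₊₁` gives a fixed point of `fᵢ₊₁`
between `sᵢ₊₁` and `u`, so the least one, `f̂ᵢ₊₁(sᵢ₊₁)`, is at most `u`.
-/

namespace OrderHom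

variable {α : Type*} [CompleteLattice α]

theorem nextFixed_le_of_map_le (f : α →o α) {x u : α} (hx : x ≤ f x) (hxu : x ≤ u)
    (hu : f u ≤ u) : (f.nextFixed x hx : α) ≤ u :=
  lfp_le _ (sup_le hxu hu)

end OrderHom

theorem IsLeast.le_of_map_le {α : Type*} [CompleteLattice α] {g : α → α} (hg : Monotone g)
    {x u w : α} (hw : IsLeast {v | v = g v ∧ x ≤ v} w) (hx : x ≤ g x) (hxu : x ≤ u)
    (hu : g u ≤ u) : w ≤ u := by
  let G : α →o α := ⟨g, hg⟩
  have hfixed : (G.nextFixed x hx : α) = g (G.nextFixed x hx) :=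
    (G.nextFixed x hx).2.symm
  exact (hw.2 ⟨hfixed, G.le_nextFixed hx⟩).trans (G.nextFixed_le_of_map_le hx hxu hu)

section Steps

variable {α : Type*} [Preorder α] {f : ℕ → α → α} {s : ℕ → α}

theorem le_succ_le_map_of_step
    (hstep : ∀ i, (s i < s (i + 1) ∧ s (i + 1) ≤ f i (s i)) ∨
                  (s i = f i (s i) ∧ s (i + 1) = s i)) (i : ℕ) :
    s i ≤ s (i + 1) ∧ s (i + 1) ≤ f i (s i) := by
  rcases hstep i with ⟨hlt, hle⟩ | ⟨hfix, hstay⟩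
  · exact ⟨hlt.le, hle⟩
  · exact ⟨hstay.ge, hstay.le.trans hfix.le⟩

end Steps

theorem decreasing_closures_general {A : Type*} [CompleteLattice A] (r : A)
    (f : ℕ → A → A) (fhat : ℕ → A → A)
    (hmon : ∀ i, Monotone (f i))
    (hfhat : ∀ i x, IsLeast {u | u = f i u ∧ x ≤ u} (fhat i x))
    (hcaged : ∀ x, r ≤ x → ∀ i, f (i + 1) (fhat i x) ≤ fhat i x)
    (s : ℕ → A) (h0 : s 0 = r)
    (hstep : ∀ i, (s i < s (i + 1) ∧ s (i + 1) ≤ f i (s i)) ∨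
                  (s i = f i (s i) ∧ s (i + 1) = s i)) :
    ∀ i, fhat (i + 1) (s (i + 1)) ≤ fhat i (s i) := by
  have hs := le_succ_le_map_of_step hstep
  have hr_le : ∀ i, r ≤ s i := fun i =>
    h0 ▸ monotone_nat_of_le_succ (fun n => (hs n).1) (Nat.zero_le i)
  intro i
  obtain ⟨⟨hu_fixed, hs_le_u⟩, -⟩ := hfhat i (s i)
  have hsucc_le_u : s (i + 1) ≤ fhat i (s i) :=
    calc s (i + 1) ≤ f i (s i) := (hs i).2
      _ ≤ f i (fhat i (s i)) := hmon i hs_le_u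
      _ = fhat i (s i) := hu_fixed.symm
  exact (hfhat (i + 1) (s (i + 1))).le_of_map_le (hmon (i + 1))
    ((hs (i + 1)).1.trans (hs (i + 1)).2) hsucc_le_u (hcaged (s i) (hr_le i) i)

theorem decreasing_closures {A : Type*} [CompleteLattice A] (r : A)
    (f : ℕ → A → A) (fhat : ℕ → A → A)
    (hmon : ∀ i, Monotone (f i))
    (hinf : ∀ i, r ≤ f i r)
    (hfhat : ∀ i x, IsLeast {u | u = f i u ∧ x ≤ u} (fhat i x))
    (hcaged : ∀ x, r ≤ x → ∀ i, f (i + 1) (fhat i x) ≤ fhat i x)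
    (s : ℕ → A) (h0 : s 0 = r)
    (hstep : ∀ i, (s i < s (i + 1) ∧ s (i + 1) ≤ f i (s i)) ∨
                  (s i = f i (s i) ∧ s (i + 1) = s i)) :
    ∀ i, fhat (i + 1) (s (i + 1)) ≤ fhat i (s i) :=
  decreasing_closures_general r f fhat hmon hfhat hcaged s h0 hstep
end

section
/- Under the hypotheses of the micro-step setting (Caged axiom, monotone fᵢ inflationary at r, sequence s₀ = r with sᵢ < sᵢ₊₁ ≤ fᵢ(sᵢ) until sₙ = fₙ(sₙ)), if the sequence reaches a fixed point sₙ = fₙ(sₙ), then f̂ₙ(r) ≤ sₙ ≤ f̂₀(r). -/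
theorem IsLeast.le_of_map_le_s11 {A : Type*} [CompleteLattice A] {g : A → A} (hg : Monotone g)
    {x b c : A} (hc : IsLeast {u | u = g u ∧ x ≤ u} c) (hx : x ≤ g x) (hb : g b ≤ b)
    (hxb : x ≤ b) : c ≤ b := by
  let G : A →o A := ⟨g, hg⟩
  have hnext : c ≤ G.nextFixed x hx :=
    hc.2 ⟨(G.nextFixed x hx).2.symm, G.le_nextFixed hx⟩
  exact hnext.trans (OrderHom.lfp_le _ (sup_le hxb hb))

section Microstep

variable {A : Type*} [CompleteLattice A] {f fhat : ℕ → A → A} {s : ℕ → A}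

def IsMicrostepSeq (f : ℕ → A → A) (s : ℕ → A) : Prop :=
  ∀ i, (s i < s (i + 1) ∧ s (i + 1) ≤ f i (s i)) ∨ (s i = f i (s i) ∧ s (i + 1) = s i)

namespace IsMicrostepSeq

theorem monotone (hs : IsMicrostepSeq f s) : Monotone s := by
  refine monotone_nat_of_le_succ fun i => ?_
  rcases hs i with ⟨hlt, -⟩ | ⟨-, hstay⟩
  · exact hlt.le
  · exact hstay.ge

theorem le_map (hs : IsMicrostepSeq f s) (i : ℕ) : s i ≤ f i (s i) := by
  rcases hs i with ⟨hlt, hle⟩ | ⟨hfix, -⟩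
  · exact hlt.le.trans hle
  · exact hfix.le

/-- Decreasing closures: by the cage, `fhat i (s i)` is a prefixed point of `f (i + 1)` above
`s (i + 1)`. -/
theorem closure_succ_le (hs : IsMicrostepSeq f s) (hmon : ∀ i, Monotone (f i))
    (hfhat : ∀ i x, IsLeast {u | u = f i u ∧ x ≤ u} (fhat i x))
    (i : ℕ) (hcage : f (i + 1) (fhat i (s i)) ≤ fhat i (s i)) :
    fhat (i + 1) (s (i + 1)) ≤ fhat i (s i) := by
  obtain ⟨⟨hfixed, hs_le⟩, -⟩ := hfhat i (s i)
  have hsucc_le : s (i + 1) ≤ fhat i (s i) := by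
    rcases hs i with ⟨-, hle⟩ | ⟨-, hstay⟩
    · exact hle.trans ((hmon i hs_le).trans hfixed.ge)
    · exact hstay.le.trans hs_le
  exact (hfhat (i + 1) (s (i + 1))).le_of_map_le_s11 (hmon (i + 1)) (hs.le_map (i + 1)) hcage
    hsucc_le

theorem closure_antitone {r : A} (hs : IsMicrostepSeq f s) (hmon : ∀ i, Monotone (f i))
    (hfhat : ∀ i x, IsLeast {u | u = f i u ∧ x ≤ u} (fhat i x))
    (hcaged : ∀ x, r ≤ x → ∀ i, f (i + 1) (fhat i x) ≤ fhat i x) (hr : ∀ i, r ≤ s i) :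
    Antitone fun i => fhat i (s i) :=
  antitone_nat_of_succ_le fun i => hs.closure_succ_le hmon hfhat i (hcaged (s i) (hr i) i)

end IsMicrostepSeq

end Microstep

theorem microstep_aim_general {A : Type*} [CompleteLattice A] (r : A)
    (f : ℕ → A → A) (fhat : ℕ → A → A)
    (hmon : ∀ i, Monotone (f i))
    (hfhat : ∀ i x, IsLeast {u | u = f i u ∧ x ≤ u} (fhat i x))
    (hcaged : ∀ x, r ≤ x → ∀ i, f (i + 1) (fhat i x) ≤ fhat i x)
    (s : ℕ → A) (h0 : s 0 = r)
    (hstep : ∀ i, (s i < s (i + 1) ∧ s (i + 1) ≤ f i (s i)) ∨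
                  (s i = f i (s i) ∧ s (i + 1) = s i))
    (n : ℕ) (hfix : s n = f n (s n)) :
    fhat n r ≤ s n ∧ s n ≤ fhat 0 r := by
  have hs : IsMicrostepSeq f s := hstep
  have hr : ∀ i, r ≤ s i := fun i => h0 ▸ hs.monotone (Nat.zero_le i)
  refine ⟨(hfhat n r).2 ⟨hfix, hr n⟩, ?_⟩
  calc s n ≤ fhat n (s n) := (hfhat n (s n)).1.2
    _ ≤ fhat 0 (s 0) := hs.closure_antitone hmon hfhat hcaged hr (Nat.zero_le n)
    _ = fhat 0 r := by rw [h0]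

theorem microstep_aim {A : Type*} [CompleteLattice A] (r : A)
    (f : ℕ → A → A) (fhat : ℕ → A → A)
    (hmon : ∀ i, Monotone (f i))
    (hinf : ∀ i, r ≤ f i r)
    (hfhat : ∀ i x, IsLeast {u | u = f i u ∧ x ≤ u} (fhat i x))
    (hcaged : ∀ x, r ≤ x → ∀ i, f (i + 1) (fhat i x) ≤ fhat i x)
    (s : ℕ → A) (h0 : s 0 = r)
    (hstep : ∀ i, (s i < s (i + 1) ∧ s (i + 1) ≤ f i (s i)) ∨
                  (s i = f i (s i) ∧ s (i + 1) = s i))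
    (n : ℕ) (hfix : s n = f n (s n)) :
    fhat n r ≤ s n ∧ s n ≤ fhat 0 r :=
  microstep_aim_general r f fhat hmon hfhat hcaged s h0 hstep n hfix
end

section
/- Let Nodes be a finite set, roots ⊆ Nodes, sucs : Nodes → Set Nodes, and W ⊆ Nodes with z ∈ W. Define WS(W) = (W ∩ roots) ∪ {b | ∃ a ∈ Nodes \ W, b ∈ sucs(a) ∧ b ∈ W}. Then WS(W \ {z}) = (WS(W) ∪ {b | b ∈ sucs(z) ∧ b ∈ W}) \ {z}. -/
theorem setOf_mem_succ_diff_singleton {Node : Type*} (sucs : Node → Set Node) (W : Set Node)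
    (z : Node) :
    {b | ∃ a ∈ Set.univ \ (W \ {z}), b ∈ sucs a ∧ b ∈ W \ {z}} =
      ({b | ∃ a ∈ Set.univ \ W, b ∈ sucs a ∧ b ∈ W} ∪ {b | b ∈ sucs z ∧ b ∈ W}) \ {z} := by
  ext b
  simp only [Set.mem_union, Set.mem_sdiff, Set.mem_ofPred_eq, Set.mem_singleton_iff,
    Set.mem_univ, true_and, not_and, not_not]
  constructor
  · rintro ⟨a, haW, hab, hbW, hbz⟩
    by_cases haz : a = z
    · exact ⟨Or.inr ⟨haz ▸ hab, hbW⟩, hbz⟩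
    · exact ⟨Or.inl ⟨a, fun h => haz (haW h), hab, hbW⟩, hbz⟩
  · rintro ⟨⟨a, haW, hab, hbW⟩ | ⟨hzb, hbW⟩, hbz⟩
    · exact ⟨a, fun h => absurd h haW, hab, hbW, hbz⟩
    · exact ⟨z, fun _ => rfl, hzb, hbW, hbz⟩

theorem workset_incremental_general {Node : Type*} (roots : Set Node)
    (sucs : Node → Set Node)
    (WS : Set Node → Set Node)
    (hWS : ∀ W, WS W = (W ∩ roots) ∪ {b | ∃ a ∈ Set.univ \ W, b ∈ sucs a ∧ b ∈ W})
    (W : Set Node) (z : Node) :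
    WS (W \ {z}) = (WS W ∪ {b | b ∈ sucs z ∧ b ∈ W}) \ {z} := by
  rw [hWS, hWS, setOf_mem_succ_diff_singleton, Set.union_assoc,
    Set.union_sdiff_distrib (s := W ∩ roots), Set.inter_sdiff_right_comm]

theorem workset_incremental {Node : Type*} [Finite Node] (roots : Set Node)
    (sucs : Node → Set Node)
    (WS : Set Node → Set Node)
    (hWS : ∀ W, WS W = (W ∩ roots) ∪ {b | ∃ a ∈ Set.univ \ W, b ∈ sucs a ∧ b ∈ W})
    (W : Set Node) (z : Node) (hz : z ∈ W) :
    WS (W \ {z}) = (WS W ∪ {b | b ∈ sucs z ∧ b ∈ W}) \ {z} :=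
  workset_incremental_general roots sucs WS hWS W z
end
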